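/- Let ν be a Borel sub-probability measure on [0,1] with total mass 1 - ρ where ρ ≥ 0 and ∫ x dν = r ≥ m. Then, for S_n the sum of n i.i.d. variables with (sub-)law ν, one has P_ν(S_n ≤ t) ≤ p(m,t). In particular, the supremum of P(S_n ≤ t) over all sub-probability measures on [0,1] with mean at least m equals p(m,t). -/

import Mathlib

/-!
Let `ν` have mean `r ≥ m > 0` and put `l = m / r ≤ 1`. Scaling `ν` by `l` and placing the
missing mass `1 - ν ℝ` at `0` gives a probability measure `μ` on `[0,1]` with mean exactly `m`.
Since the coordinates are nonnegative, scaling them down only shrinks the sum, so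
`P_ν(S_n ≤ t) ≤ P_{l·ν}(S_n ≤ t)`; and a product measure is monotone in its factors, so this is
at most `P_μ(S_n ≤ t) ≤ p(m,t)`. The reverse inequality for the supremum is trivial, as every
admissible probability measure is an admissible sub-probability measure.
-/

open MeasureTheory

/-- `pSup n m t = sup_{μ ∈ D_m} P_μ(S_n ≤ t)`. -/
noncomputable def pSup (n : ℕ) (m t : ℝ) : ENNReal :=
  ⨆ (μ : Measure ℝ) (_ : IsProbabilityMeasure μ ∧ μ (Set.Icc (0:ℝ) 1)ᶜ = 0 ∧
      (∫ x, x ∂μ) = m),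
    Measure.pi (fun _ : Fin n => μ) {x | ∑ i, x i ≤ t}

open Set

namespace MeasureTheory

theorem OuterMeasure.pi_mono {ι : Type*} [Fintype ι] {α : ι → Type*}
    {m m' : ∀ i, OuterMeasure (α i)} (h : ∀ i, m i ≤ m' i) :
    OuterMeasure.pi m ≤ OuterMeasure.pi m' :=
  le_boundedBy.2 fun s =>
    (boundedBy_le s).trans (Finset.prod_le_prod' fun i _ => h i _)

theorem Measure.pi_mono {ι : Type*} [Fintype ι] {α : ι → Type*} [∀ i, MeasurableSpace (α i)]
    {μ μ' : ∀ i, Measure (α i)} (h : ∀ i, μ i ≤ μ' i) :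
    Measure.pi μ ≤ Measure.pi μ' :=
  Measure.le_iff.2 fun s hs => by
    rw [Measure.pi_def, Measure.pi_def, toMeasure_apply _ _ hs, toMeasure_apply _ _ hs]
    exact OuterMeasure.pi_mono (fun i => toOuterMeasure_le.2 (h i)) s

end MeasureTheory

section

variable {ι : Type*} [Fintype ι]

theorem measurableSet_sum_le (t : ℝ) : MeasurableSet {x : ι → ℝ | ∑ i, x i ≤ t} :=
  measurableSet_le (Finset.measurable_sum _ fun i _ => measurable_pi_apply i) measurable_const

theorem pi_sum_le_le_pi_map_const_mul {ν : Measure ℝ} [IsFiniteMeasure ν]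
    (hν : ∀ᵐ x ∂ν, 0 ≤ x) {l : ℝ} (hl : l ≤ 1) (t : ℝ) :
    Measure.pi (fun _ : ι => ν) {x | ∑ i, x i ≤ t} ≤
      Measure.pi (fun _ : ι => ν.map (l * ·)) {x | ∑ i, x i ≤ t} := by
  have hmp : MeasurePreserving (fun (x : ι → ℝ) i => l * x i)
      (Measure.pi fun _ => ν) (Measure.pi fun _ => ν.map (l * ·)) :=
    measurePreserving_pi _ _ fun _ => ⟨measurable_const_mul l, rfl⟩
  have hshrink : (fun (x : ι → ℝ) i => l * x i) ≤ᵐ[Measure.pi fun _ => ν] fun x i => x i :=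
    Measure.ae_le_pi fun _ => hν.mono fun x hx => mul_le_of_le_one_left hx hl
  calc Measure.pi (fun _ : ι => ν) {x | ∑ i, x i ≤ t}
      ≤ Measure.pi (fun _ : ι => ν) ((fun x i => l * x i) ⁻¹' {x | ∑ i, x i ≤ t}) :=
        measure_mono_ae <| hshrink.mono fun x hx (hxt : ∑ i, x i ≤ t) =>
          (Finset.sum_le_sum fun i _ => hx i).trans hxt
    _ = _ := hmp.measure_preimage (measurableSet_sum_le t).nullMeasurableSet

end

noncomputable def fillAtZero (ν : Measure ℝ) : Measure ℝ :=
  ν + (1 - ν univ) • Measure.dirac 0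

section

variable {ν : Measure ℝ} {l : ℝ}

theorem fillAtZero_isProbabilityMeasure (hν : ν univ ≤ 1) :
    IsProbabilityMeasure (fillAtZero ν) :=
  ⟨by simp [fillAtZero, add_tsub_cancel_of_le hν]⟩

theorem le_fillAtZero : ν ≤ fillAtZero ν :=
  Measure.le_add_right le_rfl

theorem fillAtZero_compl_Icc (hν : ν (Icc 0 1)ᶜ = 0) : fillAtZero ν (Icc 0 1)ᶜ = 0 := by
  simp [fillAtZero, hν]

theorem integral_id_fillAtZero (hint : Integrable (fun x => x) ν) :
    ∫ x, x ∂fillAtZero ν = ∫ x, x ∂ν := by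
  have hc : (1 - ν univ) ≠ ⊤ := ne_top_of_le_ne_top ENNReal.one_ne_top tsub_le_self
  rw [fillAtZero, integral_add_measure hint ((integrable_dirac (by simp)).smul_measure hc),
    integral_smul_measure, integral_dirac, smul_zero, add_zero]

theorem map_const_mul_univ : ν.map (l * ·) univ = ν univ := by
  rw [Measure.map_apply (measurable_const_mul l) MeasurableSet.univ, preimage_univ]

theorem map_const_mul_compl_Icc (hν : ν (Icc 0 1)ᶜ = 0) (hl0 : 0 ≤ l) (hl1 : l ≤ 1) :
    ν.map (l * ·) (Icc 0 1)ᶜ = 0 := by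
  rw [Measure.map_apply (measurable_const_mul l) measurableSet_Icc.compl]
  refine measure_mono_null (fun x (hx : l * x ∉ Icc 0 1) (hxI : x ∈ Icc 0 1) => hx ?_) hν
  exact ⟨mul_nonneg hl0 hxI.1, mul_le_one₀ hl1 hxI.1 hxI.2⟩

theorem integrable_id_map_const_mul (hint : Integrable (fun x => x) ν) :
    Integrable (fun x => x) (ν.map (l * ·)) :=
  (integrable_map_measure aestronglyMeasurable_id (measurable_const_mul l).aemeasurable).2
    (hint.const_mul l)

theorem integral_id_map_const_mul : ∫ x, x ∂ν.map (l * ·) = l * ∫ x, x ∂ν := by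
  rw [integral_map (measurable_const_mul l).aemeasurable measurable_id'.aestronglyMeasurable,
    integral_const_mul]

end

theorem pi_sum_le_le_pSup (n : ℕ) {m : ℝ} (t : ℝ) (hm : 0 < m) {ν : Measure ℝ}
    (hν1 : ν univ ≤ 1) (hν : ν (Icc 0 1)ᶜ = 0) (hνm : m ≤ ∫ x, x ∂ν) :
    Measure.pi (fun _ : Fin n => ν) {x | ∑ i, x i ≤ t} ≤ pSup n m t := by
  have : IsFiniteMeasure ν := ⟨hν1.trans_lt ENNReal.one_lt_top⟩
  have hIcc : ∀ᵐ x ∂ν, x ∈ Icc (0 : ℝ) 1 := mem_ae_iff.2 hν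
  have hint : Integrable (fun x => x) ν := .of_mem_Icc 0 1 aemeasurable_id hIcc
  set r := ∫ x, x ∂ν
  have hr : 0 < r := hm.trans_le hνm
  set l := m / r
  have hl0 : 0 ≤ l := div_nonneg hm.le hr.le
  have hl1 : l ≤ 1 := (div_le_one hr).2 hνm
  set μ := fillAtZero (ν.map (l * ·))
  have hμ : IsProbabilityMeasure μ := fillAtZero_isProbabilityMeasure (by
    rwa [map_const_mul_univ])
  have hμ_supp : μ (Icc 0 1)ᶜ = 0 := fillAtZero_compl_Icc (map_const_mul_compl_Icc hν hl0 hl1)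
  have hμ_mean : ∫ x, x ∂μ = m := by
    rw [integral_id_fillAtZero (integrable_id_map_const_mul hint),
      integral_id_map_const_mul, div_mul_cancel₀ m hr.ne']
  calc Measure.pi (fun _ : Fin n => ν) {x | ∑ i, x i ≤ t}
      ≤ Measure.pi (fun _ : Fin n => ν.map (l * ·)) {x | ∑ i, x i ≤ t} :=
        pi_sum_le_le_pi_map_const_mul (hIcc.mono fun _ hx => hx.1) hl1 t
    _ ≤ Measure.pi (fun _ : Fin n => μ) {x | ∑ i, x i ≤ t} :=
        Measure.pi_mono (fun _ => le_fillAtZero) _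
    _ ≤ pSup n m t := le_iSup₂_of_le μ ⟨hμ, hμ_supp, hμ_mean⟩ le_rfl

theorem stmt_7_general (n : ℕ) (m t : ℝ) (hm0 : 0 < m) :
    (∀ ν : Measure ℝ, ν Set.univ ≤ 1 → ν (Set.Icc (0:ℝ) 1)ᶜ = 0 →
      m ≤ (∫ x, x ∂ν) →
      Measure.pi (fun _ : Fin n => ν) {x | ∑ i, x i ≤ t} ≤ pSup n m t) ∧
    (⨆ (ν : Measure ℝ) (_ : ν Set.univ ≤ 1 ∧ ν (Set.Icc (0:ℝ) 1)ᶜ = 0 ∧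
        m ≤ (∫ x, x ∂ν)),
      Measure.pi (fun _ : Fin n => ν) {x | ∑ i, x i ≤ t}) = pSup n m t := by
  refine ⟨fun ν hν1 hν hνm => pi_sum_le_le_pSup n t hm0 hν1 hν hνm, le_antisymm
    (iSup₂_le fun ν hν => pi_sum_le_le_pSup n t hm0 hν.1 hν.2.1 hν.2.2)
    (iSup₂_le fun μ ⟨hμ, hμ_supp, hμ_mean⟩ => le_iSup₂_of_le μ
      ⟨hμ.measure_univ.le, hμ_supp, hμ_mean.ge⟩ le_rfl)⟩

/-- Any sub-probability measure `ν` on `[0,1]` with mean at least `m` satisfies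
`P_ν(S_n ≤ t) ≤ p(m,t)`; in particular the supremum over all such sub-probability
measures equals `p(m,t)`. -/
theorem stmt_7 (n : ℕ) (m t : ℝ) (hm0 : 0 < m) (hm1 : m < 1)
    (ht0 : 0 ≤ t) (ht : t < m * n) :
    (∀ ν : Measure ℝ, ν Set.univ ≤ 1 → ν (Set.Icc (0:ℝ) 1)ᶜ = 0 →
      m ≤ (∫ x, x ∂ν) →
      Measure.pi (fun _ : Fin n => ν) {x | ∑ i, x i ≤ t} ≤ pSup n m t) ∧
    (⨆ (ν : Measure ℝ) (_ : ν Set.univ ≤ 1 ∧ ν (Set.Icc (0:ℝ) 1)ᶜ = 0 ∧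
        m ≤ (∫ x, x ∂ν)),
      Measure.pi (fun _ : Fin n => ν) {x | ∑ i, x i ≤ t}) = pSup n m t :=
  stmt_7_general n m t hm0
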